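/- arXiv:2110.06890 — 2 statements merged into one kernel-verified Lean document; each statement's English description precedes it below -/
import Mathlib

section
/- A sequence s is possible for an agent π if and only if s is possible for its reality check π_RC. -/
/-- Alternating history x₁y₁...xₙ ending in a percept: the first percept
    together with the list of subsequent (action, percept) pairs. -/
abbrev Hist (P A : Type*) := P × List (A × P)

/-- An agent maps nonempty alternating percept-action histories
    (ending in a percept) to actions. -/
abbrev Agent (P A : Type*) := Hist P A → A

/-- `h` is possible for `π`: for all 1 ≤ i < n, π(x₁y₁...xᵢ) = yᵢ. -/
def Possible {P A : Type*} (π : Agent P A) (h : Hist P A) : Prop :=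
  ∀ i, (hi : i < h.2.length) → π (h.1, h.2.take i) = (h.2.get ⟨i, hi⟩).1

/-- Auxiliary recursion for the reality check. -/
def RCAux {P A : Type*} [DecidableEq A] (π : Agent P A) (x : P) (l : List (A × P)) : A :=
  if (∀ i, (hi : i < l.length) → RCAux π x (l.take i) = (l.get ⟨i, hi⟩).1)
  then π (x, l) else π (x, [])
termination_by l.length
decreasing_by all_goals (simp [List.length_take]; omega)

/-- The reality check π_RC of π: π_RC(s) = π(s) if s is possible for π_RC,
    else π_RC(s) = π(⟨x₁⟩). -/
def RC {P A : Type*} [DecidableEq A] (π : Agent P A) : Agent P A :=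
  fun h => RCAux π h.1 h.2

/-! On a history that is possible for π_RC, the reality check takes its first branch and so agrees
with π. Extending a history one step at a time, possibility for π and for π_RC therefore impose
the same condition on each new action. -/

theorem possible_nil {P A : Type*} (π : Agent P A) (x : P) : Possible π (x, []) :=
  fun _ hi => absurd hi (Nat.not_lt_zero _)

theorem possible_append_singleton {P A : Type*} (π : Agent P A) (x : P) (l : List (A × P))
    (p : A × P) : Possible π (x, l ++ [p]) ↔ Possible π (x, l) ∧ π (x, l) = p.1 := by
  simp only [Possible, List.length_append, List.length_singleton, Nat.lt_succ_iff_lt_or_eq,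
    List.get_eq_getElem]
  constructor
  · intro h
    refine ⟨fun i hi => ?_, ?_⟩
    · simpa [List.take_append_of_le_length hi.le, List.getElem_append_left hi] using h i (.inl hi)
    · simpa using h l.length (.inr rfl)
  · rintro ⟨hl, hlast⟩ i (hi | rfl)
    · simpa [List.take_append_of_le_length hi.le, List.getElem_append_left hi] using hl i hi
    · simpa using hlast

theorem RC_apply_of_possible {P A : Type*} [DecidableEq A] {π : Agent P A} {h : Hist P A}
    (hp : Possible (RC π) h) : RC π h = π h := by
  rw [RC, RCAux]
  exact if_pos hp

theorem possible_iff_possible_realityCheck_general {P A : Type*}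
    [DecidableEq A]
    (π : Agent P A) (h : Hist P A) :
    Possible π h ↔ Possible (RC π) h := by
  obtain ⟨x, l⟩ := h
  induction l using List.reverseRecOn with
  | nil => exact iff_of_true (possible_nil π x) (possible_nil (RC π) x)
  | append_singleton l p ih =>
    rw [possible_append_singleton, possible_append_singleton, ih]
    exact and_congr_right fun hp => by rw [RC_apply_of_possible hp]

/-- A sequence is possible for π iff it is possible for π_RC. -/
theorem possible_iff_possible_realityCheck {P A : Type*}
    [Fintype P] [Fintype A] [DecidableEq A]
    (π : Agent P A) (h : Hist P A) :
    Possible π h ↔ Possible (RC π) h :=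
  possible_iff_possible_realityCheck_general π h
end

section
/- The reality check defaulting to y is idempotent: (π_RC(y))_RC(y) = π_RC(y) for every agent π. -/
/-- Auxiliary recursion for the reality check defaulting to y. -/
def RCdAux {P A : Type*} [DecidableEq A] (π : Agent P A) (y : A)
    (x : P) (l : List (A × P)) : A :=
  if (∀ i, (hi : i < l.length) → RCdAux π y x (l.take i) = (l.get ⟨i, hi⟩).1)
  then π (x, l) else y
termination_by l.length
decreasing_by all_goals (simp [List.length_take]; omega)

/-- The reality check of π defaulting to y: π_RC(y)(s) = π(s) if s is
    possible for π_RC(y), else π_RC(y)(s) = y. -/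
def RCd {P A : Type*} [DecidableEq A] (π : Agent P A) (y : A) : Agent P A :=
  fun h => RCdAux π y h.1 h.2

/-! `RCd π y` satisfies the defining equation of the reality check of itself: on histories
possible for it, it returns its own value, and elsewhere it returns `y`. That equation has only
one solution, since it fixes the value on a history from the values on its proper prefixes. -/

section RealityCheck

open Classical

variable {P A : Type*}

theorem possible_congr {σ τ : Agent P A} {h : Hist P A}
    (hστ : ∀ i < h.2.length, σ (h.1, h.2.take i) = τ (h.1, h.2.take i)) :
    Possible σ h ↔ Possible τ h :=
  forall_congr' fun i => forall_congr' fun hi => by rw [hστ i hi]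

variable [DecidableEq A] (π : Agent P A) (y : A)

theorem RCd_eq_ite (h : Hist P A) : RCd π y h = if Possible (RCd π y) h then π h else y := by
  rw [RCd, RCdAux]
  exact if_congr Iff.rfl rfl rfl

theorem eq_RCd_of_forall_eq_ite {σ : Agent P A}
    (hσ : ∀ h, σ h = if Possible σ h then π h else y) (h : Hist P A) : σ h = RCd π y h := by
  rw [hσ, RCd_eq_ite, possible_congr fun i hi => eq_RCd_of_forall_eq_ite hσ (h.1, h.2.take i)]
termination_by h.2.length
decreasing_by exact (List.length_take_le i h.2).trans_lt hi

theorem RCd_eq_ite_self (h : Hist P A) :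
    RCd π y h = if Possible (RCd π y) h then RCd π y h else y := by
  split_ifs with hpos
  · rfl
  · rw [RCd_eq_ite, if_neg hpos]

end RealityCheck

theorem realityCheckDefault_idempotent_general {P A : Type*}
    [DecidableEq A] (π : Agent P A) (y : A) :
    RCd (RCd π y) y = RCd π y :=
  funext fun h => (eq_RCd_of_forall_eq_ite (RCd π y) y (RCd_eq_ite_self π y) h).symm

/-- The reality check defaulting to y is idempotent. -/
theorem realityCheckDefault_idempotent {P A : Type*}
    [Fintype P] [Fintype A] [DecidableEq A] (π : Agent P A) (y : A) :
    RCd (RCd π y) y = RCd π y :=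
  realityCheckDefault_idempotent_general π y
end
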